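/- Let U and V be primitive strings with |U| < |V|, and suppose U^3 is a prefix of a string T1 and V^3 is a prefix of a string T2, where T1 is obtained from T2 by restricting each character (i.e., there is a map φ with T1(k) = φ(T2(k)) for all k, or vice versa). Then 2|U| ≤ |V|. -/
import Mathlib


/-- The `k`-th power of a string: concatenation of `k` copies of `V`. -/
def listPow {α : Type*} (V : List α) (k : ℕ) : List α := (List.replicate k V).flatten

/-- A string is primitive if it is not a power `V^k` with `k > 1`. -/
def PrimitiveList {α : Type*} (U : List α) : Prop :=
  ∀ (V : List α) (k : ℕ), 1 < k → U ≠ listPow V k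

lemma listPow_zero {α : Type*} (V : List α) : listPow V 0 = [] := rfl

lemma listPow_succ {α : Type*} (V : List α) (k : ℕ) :
    listPow V (k+1) = V ++ listPow V k := by
  simp [listPow, List.replicate_succ]

lemma listPow_one {α : Type*} (V : List α) : listPow V 1 = V := by
  simp [listPow]

lemma listPow_add {α : Type*} (V : List α) (a b : ℕ) :
    listPow V (a+b) = listPow V a ++ listPow V b := by
  induction a with
  | zero => simp [listPow_zero]
  | succ n ih => rw [Nat.succ_add, listPow_succ, listPow_succ, ih, List.append_assoc]

lemma listPow_length {α : Type*} (V : List α) (k : ℕ) :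
    (listPow V k).length = k * V.length := by
  induction k with
  | zero => simp [listPow_zero]
  | succ n ih => rw [listPow_succ, List.length_append, ih]; ring

lemma listPow_three {α : Type*} (V : List α) :
    listPow V 3 = V ++ (V ++ V) := by
  rw [show (3:ℕ) = 2+1 by rfl, show (2:ℕ) = 1+1 by rfl, listPow_succ, listPow_succ, listPow_one]

lemma listPow_map {α β : Type*} (φ : α → β) (V : List α) (k : ℕ) :
    (listPow V k).map φ = listPow (V.map φ) k := by
  induction k with
  | zero => simp [listPow_zero]
  | succ n ih => rw [listPow_succ, listPow_succ, List.map_append, ih]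

/-- Commuting words are powers of a common word. -/
lemma comm_pow {α : Type*} : ∀ (n : ℕ) (X Y : List α), X.length + Y.length ≤ n →
    X ++ Y = Y ++ X → ∃ Z a b, X = listPow Z a ∧ Y = listPow Z b := by
  intro n
  induction n with
  | zero =>
    intro X Y hn _
    have hX : X = [] := by
      have := List.length_eq_zero_iff.mp (by omega : X.length = 0); exact this
    have hY : Y = [] := by
      have := List.length_eq_zero_iff.mp (by omega : Y.length = 0); exact this
    exact ⟨[], 0, 0, by simp [hX, listPow_zero], by simp [hY, listPow_zero]⟩
  | succ n ih =>
    intro X Y hn h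
    by_cases hX : X = []
    · exact ⟨Y, 0, 1, by simp [hX, listPow_zero], (listPow_one Y).symm⟩
    by_cases hY : Y = []
    · exact ⟨X, 1, 0, (listPow_one X).symm, by simp [hY, listPow_zero]⟩
    have hXpos : 0 < X.length := List.length_pos_iff.mpr hX
    have hYpos : 0 < Y.length := List.length_pos_iff.mpr hY
    by_cases hle : X.length ≤ Y.length
    · -- X is a prefix of Y
      have hXp : X <+: Y ++ X := h ▸ List.prefix_append X Y
      have hXY : X <+: Y :=
        List.prefix_of_prefix_length_le hXp (List.prefix_append Y X) hle
      obtain ⟨Y', rfl⟩ := hXY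
      rw [List.append_assoc] at h
      have h' : X ++ Y' = Y' ++ X := by
        have := List.append_cancel_left (by rw [← h] : X ++ (X ++ Y') = X ++ (Y' ++ X))
        exact this
      have hm : X.length + Y'.length ≤ n := by
        simp only [List.length_append] at hn; omega
      obtain ⟨Z, a, b, hA, hB⟩ := ih X Y' hm h'
      exact ⟨Z, a, a + b, hA, by rw [listPow_add, ← hA, ← hB]⟩
    · -- Y is a prefix of X
      have hYp : Y <+: X ++ Y := h.symm ▸ List.prefix_append Y X
      have hYX : Y <+: X :=
        List.prefix_of_prefix_length_le hYp (List.prefix_append X Y) (by omega)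
      obtain ⟨X', rfl⟩ := hYX
      rw [List.append_assoc] at h
      have h' : X' ++ Y = Y ++ X' :=
        List.append_cancel_left (by rw [h] : Y ++ (X' ++ Y) = Y ++ (Y ++ X'))
      have hm : X'.length + Y.length ≤ n := by
        simp only [List.length_append] at hn; omega
      obtain ⟨Z, a, b, hA, hB⟩ := ih X' Y hm h'
      exact ⟨Z, b + a, b, by rw [listPow_add, ← hA, ← hB], hB⟩

/-- Core lemma: if `P^3` is a prefix of `Q^3` with `|P| < |Q| < 2|P|`,
then neither `P` nor `Q` is primitive. -/
lemma triple_prefix_not_primitive {α : Type*} (P Q : List α)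
    (h1 : 0 < P.length) (hlt : P.length < Q.length) (h2 : Q.length < 2 * P.length)
    (hpre : listPow P 3 <+: listPow Q 3) :
    (¬ PrimitiveList P) ∧ (¬ PrimitiveList Q) := by
  -- P is a prefix of Q
  have hP3 : P <+: listPow P 3 := by rw [listPow_three]; exact List.prefix_append P _
  have hQ3 : Q <+: listPow Q 3 := by rw [listPow_three]; exact List.prefix_append Q _
  have hPQ : P <+: Q :=
    List.prefix_of_prefix_length_le (hP3.trans hpre) hQ3 hlt.le
  obtain ⟨A, hQ⟩ := hPQ
  have hAlen : Q.length = P.length + A.length := by rw [← hQ, List.length_append]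
  have hApos : 0 < A.length := by omega
  have hAlt : A.length < P.length := by omega
  -- unfold the prefix relation
  obtain ⟨t, ht⟩ := hpre
  rw [listPow_three, listPow_three, ← hQ] at ht
  simp only [List.append_assoc] at ht
  -- ht : P ++ (P ++ (P ++ t)) = P ++ (A ++ (P ++ (A ++ (P ++ A))))
  have h4 : P ++ (P ++ t) = A ++ (P ++ (A ++ (P ++ A))) := List.append_cancel_left ht
  -- A is a prefix of P
  have hAP : A <+: P := by
    have hA_pre : A <+: P ++ (P ++ t) := h4 ▸ List.prefix_append A _
    exact List.prefix_of_prefix_length_le hA_pre (List.prefix_append P _) hAlt.le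
  obtain ⟨B, hP⟩ := hAP
  have hBlen : P.length = A.length + B.length := by rw [← hP, List.length_append]
  have hBpos : 0 < B.length := by omega
  -- cancel A from h4, using P = A ++ B on the left
  have h5 : B ++ (P ++ t) = P ++ (A ++ (P ++ A)) := by
    apply List.append_cancel_left (as := A)
    rw [← List.append_assoc, hP, h4]
  -- B ++ A and A ++ B are prefixes of the same list, of the same length
  have hb : B ++ A <+: P ++ (A ++ (P ++ A)) := by
    rw [← h5]
    refine ⟨B ++ t, ?_⟩
    rw [← hP]; simp [List.append_assoc]
  have hab : A ++ B <+: P ++ (A ++ (P ++ A)) :=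
    ⟨A ++ (P ++ A), by rw [hP]⟩
  have hcomm : B ++ A = A ++ B :=
    (List.prefix_of_prefix_length_le hb hab (by simp [Nat.add_comm])).eq_of_length
      (by simp [Nat.add_comm])
  obtain ⟨Z, a, b, hZA, hZB⟩ :=
    comm_pow (A.length + B.length) A B le_rfl hcomm.symm
  have hZAlen : A.length = a * Z.length := by rw [hZA, listPow_length]
  have hZBlen : B.length = b * Z.length := by rw [hZB, listPow_length]
  have ha1 : 1 ≤ a := by
    rcases Nat.eq_zero_or_pos a with h | h
    · rw [h, zero_mul] at hZAlen; omega
    · exact h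
  have hb1 : 1 ≤ b := by
    rcases Nat.eq_zero_or_pos b with h | h
    · rw [h, zero_mul] at hZBlen; omega
    · exact h
  have hPpow : P = listPow Z (a + b) := by
    rw [listPow_add, ← hZA, ← hZB, hP]
  have hQpow : Q = listPow Z (a + b + a) := by
    rw [listPow_add, ← hPpow, ← hZA, hQ]
  constructor
  · intro hprim
    exact hprim Z (a + b) (by omega) hPpow
  · intro hprim
    exact hprim Z (a + b + a) (by omega) hQpow

/-- If `U` and `V` are primitive with `|U| < |V|`, `U^3` is a prefix of `T1`, `V^3` is a
prefix of `T2`, and one of `T1`, `T2` is obtained from the other by applying a map to each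
character (so that equality of characters in the finer string implies equality in the
coarser one), then `2|U| ≤ |V|`. -/
theorem runs_evol {α β : Type*} (U T1 : List α) (V T2 : List β)
    (hU : PrimitiveList U) (hV : PrimitiveList V)
    (hlen : U.length < V.length)
    (hrel : (∃ φ : β → α, T1 = T2.map φ) ∨ (∃ ψ : α → β, T2 = T1.map ψ))
    (h1 : listPow U 3 <+: T1) (h2 : listPow V 3 <+: T2) :
    2 * U.length ≤ V.length := by
  by_contra hcon
  push_neg at hcon
  have hUne : U ≠ [] := by
    intro h
    exact hU [] 2 (by norm_num) (by simp [h, listPow])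
  have hUpos : 0 < U.length := List.length_pos_iff.mpr hUne
  rcases hrel with ⟨φ, hT⟩ | ⟨ψ, hT⟩
  · -- T1 = T2.map φ : push V into the α world
    have h2' : listPow (V.map φ) 3 <+: T1 := by
      rw [hT, ← listPow_map]
      exact h2.map φ
    have hpre : listPow U 3 <+: listPow (V.map φ) 3 := by
      refine List.prefix_of_prefix_length_le h1 h2' ?_
      rw [listPow_length, listPow_length, List.length_map]
      omega
    exact (triple_prefix_not_primitive U (V.map φ) hUpos (by simpa using hlen)
      (by simpa using hcon) hpre).1 hU
  · -- T2 = T1.map ψ : push U into the β world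
    have h1' : listPow (U.map ψ) 3 <+: T2 := by
      rw [hT, ← listPow_map]
      exact h1.map ψ
    have hpre : listPow (U.map ψ) 3 <+: listPow V 3 := by
      refine List.prefix_of_prefix_length_le h1' h2 ?_
      rw [listPow_length, listPow_length, List.length_map]
      omega
    exact (triple_prefix_not_primitive (U.map ψ) V (by simpa using hUpos)
      (by simpa using hlen) (by simpa using hcon) hpre).2 hV
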